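/- arXiv:1912.11941 — 2 statements merged into one kernel-verified Lean document; each statement's English description precedes it below -/
import Mathlib

section
/- Let G be a finite group, p a prime, and G_p a Sylow p-subgroup of G. Then G_p ∩ [G,G] ∩ Z(G) is contained in [G_p, G_p]. -/
/-!
Let `n = [G : P]`, which is prime to `p`, and let `V : G → P/[P,P]` be the transfer. Since `V`
has abelian target it kills `[G,G]`, while for `z` central in `G` and lying in `P` it is the
power map `V z = z^n mod [P,P]`. So a central `z ∈ P ∩ [G,G]` has `z^n ∈ [P,P]`; as `P/[P,P]` is a
`p`-group and `p ∤ n`, this forces `z ∈ [P,P]`.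
-/

open Subgroup

theorem MonoidHom.transfer_eq_pow_of_mem_center {G A : Type*} [Group G] [CommGroup A]
    {H : Subgroup G} [H.FiniteIndex] (ϕ : H →* A) {g : G} (hgH : g ∈ H) (hgZ : g ∈ center G) :
    ϕ.transfer g = ϕ ⟨g, hgH⟩ ^ H.index := by
  rw [MonoidHom.transfer_eq_pow ϕ g fun k g₀ _ => ?_, ← map_pow]
  · rfl
  · rw [mem_center_iff.mp (pow_mem hgZ k) g₀⁻¹, inv_mul_cancel_right]

theorem Abelianization.of_pow_index_eq_one_of_mem_center {G : Type*} [Group G]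
    {H : Subgroup G} [H.FiniteIndex] {g : G} (hgH : g ∈ H) (hgZ : g ∈ center G)
    (hgG' : g ∈ commutator G) :
    Abelianization.of (⟨g, hgH⟩ : H) ^ H.index = 1 := by
  rw [← MonoidHom.transfer_eq_pow_of_mem_center Abelianization.of hgH hgZ]
  exact Abelianization.commutator_subset_ker _ hgG'

theorem Sylow.mem_commutator_of_mem_center {G : Type*} [Group G] {p : ℕ} [Fact p.Prime]
    (P : Sylow p G) [P.FiniteIndex] {g : G} (hgP : g ∈ P) (hgZ : g ∈ center G)
    (hgG' : g ∈ commutator G) :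
    g ∈ ⁅(P : Subgroup G), (P : Subgroup G)⁆ := by
  have hpGroup : IsPGroup p (Abelianization P) := P.2.to_quotient _
  have hof : Abelianization.of (⟨g, hgP⟩ : P) = 1 :=
    (hpGroup.powEquiv' P.not_dvd_index).injective <| by
      simpa using Abelianization.of_pow_index_eq_one_of_mem_center hgP hgZ hgG'
  rw [← map_subtype_commutator]
  exact ⟨_, (QuotientGroup.eq_one_iff _).mp hof, rfl⟩

theorem stmt_3 (G : Type*) [Group G] [Finite G] (p : ℕ) [Fact p.Prime] (Gp : Sylow p G) :
    (Gp : Subgroup G) ⊓ commutator G ⊓ Subgroup.center G ≤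
      ⁅(Gp : Subgroup G), (Gp : Subgroup G)⁆ := by
  rintro g ⟨⟨hgP, hgG'⟩, hgZ⟩
  exact Gp.mem_commutator_of_mem_center hgP hgZ hgG'
end

section
/- Let G be a finite group, H ≤ G a subgroup of index 1 or p for a prime p, and M an abelian p-subgroup of G with M ⊆ Z(G) ∩ [G,G]. Then M ⊆ Φ^G(H). -/
/-- The focal subgroup `Φ^G(H)`: generated by all commutators `[h,x] = h⁻¹x⁻¹hx`
with `x ∈ G` and `h ∈ H ∩ xHx⁻¹`. -/
def focalSubgroup {G : Type*} [Group G] (H : Subgroup G) : Subgroup G :=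
  Subgroup.closure {g : G | ∃ x h : G, h ∈ H ∧ x⁻¹ * h * x ∈ H ∧ g = h⁻¹ * x⁻¹ * h * x}

/-!
Choose a Sylow `p`-subgroup `P ⊇ M` and put `Q = H ∩ P`. Since `[P : Q] ≤ [G : H] ≤ p` and
`P` is a `p`-group, `Q` is normal in `P` with cyclic quotient; then `P / [P, Q]` is
central-by-cyclic, hence abelian, so `[P, P] ≤ [P, Q]`. Every `[a, q]` with `a ∈ P`, `q ∈ Q`
is a generator of `Φ^G(H)` because `Q` is normal in `P`. It remains to see that
`M ≤ [P, P]`: for `m` central, the transfer `G → P / [P, P]` sends `m` to `m ^ [G : P]`;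
it kills `m ∈ [G, G]`, and `[G : P]` is prime to `p`.
-/

open scoped commutatorElement

section

variable {G : Type*} [Group G]

theorem Subgroup.relIndex_le_index (H K : Subgroup G) [H.FiniteIndex] :
    H.relIndex K ≤ H.index := by
  simpa using H.relIndex_le_of_le_right le_top (by simpa using Subgroup.FiniteIndex.index_ne_zero)

theorem commutator_le_focalSubgroup_of_le_normalizer {H K Q : Subgroup G} (hQH : Q ≤ H)
    (hKQ : K ≤ Subgroup.normalizer (Q : Set G)) : ⁅K, Q⁆ ≤ focalSubgroup H := by
  rw [Subgroup.commutator_le]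
  intro k hk q hq
  have hconj : k * q⁻¹ * k⁻¹ ∈ Q :=
    (Subgroup.mem_normalizer_iff.mp (hKQ hk) _).mp (inv_mem hq)
  refine Subgroup.subset_closure ⟨k, k * q⁻¹ * k⁻¹, hQH hconj, ?_, ?_⟩
  · simpa [mul_assoc] using hQH (inv_mem hq)
  · rw [commutatorElement_def]
    group

theorem map_commutator_subgroupOf_le_focalSubgroup {H P : Subgroup G}
    [(H.subgroupOf P).Normal] :
    ⁅(⊤ : Subgroup P), H.subgroupOf P⁆.map P.subtype ≤ focalSubgroup H := by
  rw [Subgroup.map_commutator, ← MonoidHom.range_eq_map, Subgroup.range_subtype,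
    Subgroup.subgroupOf_map_subtype]
  exact commutator_le_focalSubgroup_of_le_normalizer inf_le_left
    (Subgroup.normal_subgroupOf_iff_le_normalizer_inf.mp ‹_›)

theorem commutator_le_commutator_top_of_isCyclic (Q : Subgroup G) [Q.Normal]
    [IsCyclic (G ⧸ Q)] : commutator G ≤ ⁅(⊤ : Subgroup G), Q⁆ := by
  let f : G ⧸ ⁅(⊤ : Subgroup G), Q⁆ →* G ⧸ Q :=
    QuotientGroup.map _ Q (MonoidHom.id G) (Subgroup.commutator_le_right ⊤ Q)
  have hker : f.ker ≤ Subgroup.center (G ⧸ ⁅(⊤ : Subgroup G), Q⁆) := by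
    intro x hx
    obtain ⟨x, rfl⟩ := QuotientGroup.mk_surjective x
    have hxQ : x ∈ Q := (QuotientGroup.eq_one_iff x).mp hx
    rw [Subgroup.mem_center_iff]
    intro y
    obtain ⟨y, rfl⟩ := QuotientGroup.mk_surjective y
    rw [← QuotientGroup.mk_mul, ← QuotientGroup.mk_mul, QuotientGroup.eq]
    have h := Subgroup.commutator_mem_commutator (Subgroup.mem_top y⁻¹) (inv_mem hxQ)
    convert inv_mem h using 1
    rw [commutatorElement_def]
    group
  exact Subgroup.Normal.quotient_commutative_iff_commutator_le.mp
    (f.isMulCommutative_of_isCyclic_of_ker_le_center hker)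

theorem IsPGroup.index_dvd_of_index_le {p : ℕ} [Fact p.Prime] [Finite G] (hG : IsPGroup p G)
    {Q : Subgroup G} (hQ : Q.index ≤ p) : Q.index ∣ p := by
  obtain ⟨n, hn⟩ := IsPGroup.iff_card.mp hG
  obtain ⟨k, -, hkQ⟩ := (Nat.dvd_prime_pow Fact.out).mp (hn ▸ Q.index_dvd_card)
  rw [hkQ] at hQ ⊢
  have hk : k ≤ 1 := (Nat.pow_le_pow_iff_right (Fact.out : p.Prime).one_lt).mp (by simpa using hQ)
  simpa using pow_dvd_pow p hk

theorem IsPGroup.normal_of_index_dvd_prime {p : ℕ} [Fact p.Prime] [Finite G]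
    (hG : IsPGroup p G) {Q : Subgroup G} (hQ : Q.index ∣ p) : Q.Normal := by
  have hp : p.Prime := Fact.out
  rcases (Nat.dvd_prime hp).mp hQ with h | h
  · exact Subgroup.normal_of_index_eq_one h
  · obtain ⟨n, hn⟩ := IsPGroup.iff_card.mp hG
    have hn0 : n ≠ 0 := by
      rintro rfl
      simpa [hn, h, hp.ne_one] using Q.index_dvd_card
    exact Subgroup.normal_of_index_eq_minFac_card (by rw [h, hn, hp.pow_minFac hn0])

theorem isCyclic_quotient_of_index_dvd_prime {p : ℕ} [Fact p.Prime] {Q : Subgroup G} [Q.Normal]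
    (hQ : Q.index ∣ p) : IsCyclic (G ⧸ Q) := by
  rcases (Nat.dvd_prime Fact.out).mp hQ with h | h
  · have : Subsingleton (G ⧸ Q) := (Nat.card_eq_one_iff_unique.mp h).1
    infer_instance
  · exact isCyclic_of_prime_card h

theorem Sylow.mk_mem_commutator_of_mem_center {p : ℕ} [Fact p.Prime] (P : Sylow p G)
    [P.FiniteIndex] {g : G} (hgZ : g ∈ Subgroup.center G) (hg : g ∈ commutator G)
    (hgP : g ∈ P) :
    (⟨g, hgP⟩ : P) ∈ commutator P := by
  have hcentral (k : ℕ) (x : G) (_ : x⁻¹ * g ^ k * x ∈ P) : x⁻¹ * g ^ k * x = g ^ k := by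
    rw [Subgroup.mem_center_iff.mp (pow_mem hgZ k) x⁻¹, inv_mul_cancel_right]
  let ϕ : P →* Abelianization P := Abelianization.of
  have hpow : ϕ ⟨g, hgP⟩ ^ P.index = 1 := by
    rw [← map_pow, ← (ϕ.transfer).mem_ker.mp (Abelianization.commutator_subset_ker _ hg),
      MonoidHom.transfer_eq_pow ϕ g hcentral]
    rfl
  have hP : IsPGroup p (Abelianization P) := P.isPGroup'.to_quotient _
  rw [← Abelianization.ker_of, MonoidHom.mem_ker]
  exact (hP.powEquiv' P.not_dvd_index).injective (hpow.trans (one_pow _).symm)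

end

theorem stmt_4_general (G : Type*) [Group G] [Finite G] (p : ℕ) [Fact p.Prime]
    (H M : Subgroup G) (hindex : H.index = 1 ∨ H.index = p)
    (hMp : IsPGroup p M)
    (hM : M ≤ Subgroup.center G ⊓ commutator G) :
    M ≤ focalSubgroup H := by
  obtain ⟨P, hMP⟩ := hMp.exists_le_sylow
  have hHG : H.index ≤ p := hindex.elim (fun h ↦ h ▸ (Fact.out : p.Prime).one_le) le_of_eq
  have hHP : (H.subgroupOf P).index ∣ p :=
    P.isPGroup'.index_dvd_of_index_le ((H.relIndex_le_index P).trans hHG)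
  have := P.isPGroup'.normal_of_index_dvd_prime hHP
  have := isCyclic_quotient_of_index_dvd_prime hHP
  intro m hm
  have hmP := commutator_le_commutator_top_of_isCyclic (H.subgroupOf P)
    (P.mk_mem_commutator_of_mem_center (hM hm).1 (hM hm).2 (hMP hm))
  exact map_commutator_subgroupOf_le_focalSubgroup ⟨_, hmP, rfl⟩

theorem stmt_4 (G : Type*) [Group G] [Finite G] (p : ℕ) [Fact p.Prime]
    (H M : Subgroup G) (hindex : H.index = 1 ∨ H.index = p)
    (hMp : IsPGroup p M) (hMcomm : IsMulCommutative M)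
    (hM : M ≤ Subgroup.center G ⊓ commutator G) :
    M ≤ focalSubgroup H :=
  stmt_4_general G p H M hindex hMp hM
end
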